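/- arXiv:2509.17612 — 4 statements merged into one kernel-verified Lean document; each statement's English description precedes it below -/
import Mathlib

section
/- Let X be a set, A a finite index set, and for each ◇ ∈ A let g_◇ : 𝒫(X) → 𝒫(X) satisfy g_◇(∅) = ∅ and g_◇(U ∪ V) = g_◇(U) ∪ g_◇(V) for all U,V ⊆ X. (1) For every finite family 𝒬 of subsets of X, the subalgebra of (𝒫(X), ∪, ∩, complement, (g_◇)_{◇∈A}) generated by 𝒬 is finite if and only if there exists a finite partition 𝒰 of X that refines the partition X/≡_𝒬 and is g-tuned. (2) The algebra (𝒫(X),(g_◇)_{◇∈A}) is locally finite (every finitely generated subalgebra is finite) if and only if it is tunable, i.e., every finite partition of X has a finite refinement that is g-tuned. -/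
set_option maxHeartbeats 1000000

/-- Modal formulas over an alphabet `A` of diamonds, with variables `pₙ`,
falsum and implication as primitive Boolean connectives. -/
inductive MF (A : Type) : Type
  | var : ℕ → MF A
  | bot : MF A
  | imp : MF A → MF A → MF A
  | dia : A → MF A → MF A

namespace MF

variable {A : Type}

def neg (φ : MF A) : MF A := .imp φ .bot
def top : MF A := neg .bot
def or (φ ψ : MF A) : MF A := .imp (neg φ) ψ
def and (φ ψ : MF A) : MF A := neg (.imp φ (neg ψ))
def box (a : A) (φ : MF A) : MF A := neg (.dia a (neg φ))
def iff (φ ψ : MF A) : MF A := and (.imp φ ψ) (.imp ψ φ)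

def bigOr : List (MF A) → MF A
  | [] => .bot
  | φ :: r => or φ (bigOr r)

def bigAnd : List (MF A) → MF A
  | [] => top
  | φ :: r => and φ (bigAnd r)

def subst (σ : ℕ → MF A) : MF A → MF A
  | .var n => σ n
  | .bot => .bot
  | .imp φ ψ => .imp (subst σ φ) (subst σ ψ)
  | .dia a φ => .dia a (subst σ φ)

/-- `φ` is a `k`-formula: all its variables are among `p₀,…,p_{k-1}`. -/
def varsBelow (k : ℕ) : MF A → Prop
  | .var n => n < k
  | .bot => True
  | .imp φ ψ => varsBelow k φ ∧ varsBelow k ψ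
  | .dia _ φ => varsBelow k φ

/-- Modal depth: maximal number of nested modalities. -/
def depth : MF A → ℕ
  | .var _ => 0
  | .bot => 0
  | .imp φ ψ => max (depth φ) (depth ψ)
  | .dia _ φ => depth φ + 1

end MF

/-- Truth in a Kripke model `(X, R, θ)` at a point. -/
def satM {A X : Type} (R : A → X → X → Prop) (θ : ℕ → Set X) : X → MF A → Prop
  | w, MF.var n => w ∈ θ n
  | _, MF.bot => False
  | w, MF.imp φ ψ => satM R θ w φ → satM R θ w ψ
  | w, MF.dia a φ => ∃ v, R a w v ∧ satM R θ v φ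

/-- Validity in a Kripke frame. -/
def validM {A X : Type} (R : A → X → X → Prop) (φ : MF A) : Prop :=
  ∀ θ w, satM R θ w φ

/-- `φ` is a substitution instance of a classical propositional tautology
(equivalently: true under every Boolean valuation treating variables and
diamond formulas as atoms). -/
def IsTautInstance {A : Type} (φ : MF A) : Prop :=
  ∀ f : MF A → Prop, ¬ f .bot → (∀ ψ χ, f (.imp ψ χ) ↔ (f ψ → f χ)) → f φ

/-- `L` is a normal modal logic over `A`. -/
structure IsNormalLogic {A : Type} (L : Set (MF A)) : Prop where
  taut : ∀ φ : MF A, IsTautInstance φ → φ ∈ L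
  dia_bot : ∀ a : A, (MF.dia a MF.bot).neg ∈ L
  dia_or : ∀ a : A,
    MF.imp (.dia a (MF.or (.var 0) (.var 1))) (MF.or (.dia a (.var 0)) (.dia a (.var 1))) ∈ L
  mp : ∀ {φ ψ : MF A}, MF.imp φ ψ ∈ L → φ ∈ L → ψ ∈ L
  subst_mem : ∀ {φ : MF A} (σ : ℕ → MF A), φ ∈ L → φ.subst σ ∈ L
  mono : ∀ (a : A) {φ ψ : MF A}, MF.imp φ ψ ∈ L → MF.imp (.dia a φ) (.dia a ψ) ∈ L

/-- `L` is `k`-finite: there are finitely many `k`-formulas up to `L`-equivalence. -/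
def kFinite {A : Type} (L : Set (MF A)) (k : ℕ) : Prop :=
  ∃ S : Finset (MF A), ∀ φ : MF A, φ.varsBelow k → ∃ ψ ∈ S, MF.iff φ ψ ∈ L

def LocallyTabular {A : Type} (L : Set (MF A)) : Prop := ∀ k : ℕ, kFinite L k

/-- `◇_S φ`, the disjunction of `◇φ` over `◇ ∈ S`. -/
noncomputable def diaS {A : Type} (S : Finset A) (φ : MF A) : MF A :=
  MF.bigOr (S.toList.map (fun a => MF.dia a φ))

/-- `(◇_S)^n φ`. -/
noncomputable def diaSpow {A : Type} (S : Finset A) : ℕ → MF A → MF A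
  | 0, φ => φ
  | n + 1, φ => diaS S (diaSpow S n φ)

/-- `◇_S^{≤ m} φ = ⋁_{i ≤ m} (◇_S)^i φ`. -/
noncomputable def diaSle {A : Type} (S : Finset A) (m : ℕ) (φ : MF A) : MF A :=
  MF.bigOr ((List.range (m + 1)).map (fun i => diaSpow S i φ))

/-- `□* φ = ¬◇_S^{≤ m}¬φ`. -/
noncomputable def boxSle {A : Type} (S : Finset A) (m : ℕ) (φ : MF A) : MF A :=
  MF.neg (diaSle S m (MF.neg φ))

/-- The pretransitivity formula `atr_S(m) = (◇_S)^{m+1} p₀ → ◇_S^{≤m} p₀`. -/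
noncomputable def atrS {A : Type} (S : Finset A) (m : ℕ) : MF A :=
  MF.imp (diaSpow S (m + 1) (.var 0)) (diaSle S m (.var 0))

/-- The finite-height formulas `B_h^{≤m}` over the compound modality `◇_S^{≤m}`:
`B₀ = ⊥`, `B_h = p_h → □*(◇* p_h ∨ B_{h-1})`. -/
noncomputable def BstarS {A : Type} (S : Finset A) (m : ℕ) : ℕ → MF A
  | 0 => .bot
  | h + 1 => MF.imp (.var (h + 1))
      (boxSle S m (MF.or (diaSle S m (.var (h + 1))) (BstarS S m h)))

/-- Unimodal finite-height formulas: `B₀ = ⊥`, `B_h = p_h → □(◇ p_h ∨ B_{h-1})`. -/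
def BformU : ℕ → MF Unit
  | 0 => .bot
  | h + 1 => MF.imp (.var (h + 1))
      (MF.box () (MF.or (MF.dia () (.var (h + 1))) (BformU h)))

/-- `p_i ∧ ◇_S (p_{i+1} ∧ ◇_S ( … ∧ ◇_S p_{i+n}) … )`. -/
noncomputable def chainS {A : Type} (S : Finset A) : ℕ → ℕ → MF A
  | i, 0 => .var i
  | i, n + 1 => MF.and (.var i) (diaS S (chainS S (i + 1) n))

/-- The list of pairs `(i, j)` with `i < j ≤ n`. -/
def pairsLT (n : ℕ) : List (ℕ × ℕ) :=
  (List.range (n + 1)).flatMap (fun j => (List.range j).map (fun i => (i, j)))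

/-- The reducible-path formula `R_m(◇_S)`. -/
noncomputable def RmS {A : Type} (S : Finset A) (m : ℕ) : MF A :=
  MF.imp (chainS S 0 (m + 1))
    (MF.or
      (MF.bigOr ((pairsLT (m + 1)).map
        (fun p => diaSpow S p.1 (MF.and (.var p.1) (.var p.2)))))
      (MF.bigOr ((pairsLT m).map
        (fun p => diaSpow S p.1 (MF.and (.var p.1) (diaS S (.var (p.2 + 1))))))))

/-- `n`-fold relational composition: `R⁰ = Id`, `R^{n+1} = R ∘ Rⁿ`. -/
def relPow {X : Type} (R : X → X → Prop) : ℕ → X → X → Prop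
  | 0 => fun a b => a = b
  | n + 1 => fun a c => ∃ b, R a b ∧ relPow R n b c

/-- Reflexive transitive closure `R* = ⋃ₙ Rⁿ`. -/
def relStar {X : Type} (R : X → X → Prop) (a b : X) : Prop := ∃ n, relPow R n a b

/-- `R` is `m`-transitive: `R^{m+1} ⊆ R^{≤ m}`. -/
def mTransitive {X : Type} (R : X → X → Prop) (m : ℕ) : Prop :=
  ∀ a b, relPow R (m + 1) a b → ∃ i ≤ m, relPow R i a b

/-- The union `R_F = ⋃_{◇ ∈ A} R_◇`. -/
def unionRel {A X : Type} (R : A → X → X → Prop) : X → X → Prop :=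
  fun a b => ∃ i, R i a b

/-- `R⁻¹[V] = {x ∣ ∃ y ∈ V, x R y}`. -/
def diaPre {X : Type} (R : X → X → Prop) (V : Set X) : Set X := {x | ∃ y ∈ V, R x y}

/-- The height of `(X, R)` is at most `h`: there is no strictly ascending
(h+1)-chain with respect to `R*`. -/
def heightLE {X : Type} (R : X → X → Prop) (h : ℕ) : Prop :=
  ¬ ∃ x : ℕ → X, ∀ i < h, relStar R (x i) (x (i + 1)) ∧ ¬ relStar R (x (i + 1)) (x i)

/-- A partition is `R`-tuned. -/
def RTuned {X : Type} (R : X → X → Prop) (𝒰 : Set (Set X)) : Prop :=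
  ∀ U ∈ 𝒰, ∀ V ∈ 𝒰, (∃ a ∈ U, ∃ b ∈ V, R a b) → ∀ a ∈ U, ∃ b ∈ V, R a b

/-- A partition is tuned in the frame `(X, (R_◇)_{◇ ∈ A})`. -/
def TunedIn {A X : Type} (R : A → X → X → Prop) (𝒰 : Set (Set X)) : Prop :=
  ∀ a : A, RTuned (R a) 𝒰

/-- `𝒰` refines `𝒱`: every block of `𝒰` is included in a block of `𝒱`. -/
def Refines {X : Type} (𝒰 𝒱 : Set (Set X)) : Prop := ∀ U ∈ 𝒰, ∃ V ∈ 𝒱, U ⊆ V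

/-- The equivalence `≡_𝒱` induced by a family of sets. -/
def famEq {X : Type} (𝒱 : Set (Set X)) (a b : X) : Prop := ∀ V ∈ 𝒱, (a ∈ V ↔ b ∈ V)

/-- The set of equivalence classes of a relation. -/
def eqClasses {X : Type} (E : X → X → Prop) : Set (Set X) := {C | ∃ x, C = {y | E x y}}

/-- Tunedness condition for abstract normal operators `g_◇` on the powerset. -/
def gTuned {A X : Type} (g : A → Set X → Set X) (𝒰 : Set (Set X)) : Prop :=
  ∀ a : A, ∀ U ∈ 𝒰, ∀ V ∈ 𝒰, (V ∩ g a U).Nonempty → V ⊆ g a U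

/-- `C` is a subalgebra of the modal algebra `(𝒫(X), ∪, ∩, ᶜ, (g_◇))`. -/
def IsSubalg {A X : Type} (g : A → Set X → Set X) (C : Set (Set X)) : Prop :=
  ∅ ∈ C ∧ Set.univ ∈ C ∧ (∀ U ∈ C, ∀ V ∈ C, U ∪ V ∈ C) ∧
    (∀ U ∈ C, ∀ V ∈ C, U ∩ V ∈ C) ∧ (∀ U ∈ C, Uᶜ ∈ C) ∧ (∀ U ∈ C, ∀ a : A, g a U ∈ C)

/-- The subalgebra generated by `𝒬`. -/
def genAlg {A X : Type} (g : A → Set X → Set X) (𝒬 : Set (Set X)) : Set (Set X) :=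
  ⋂₀ {C | IsSubalg g C ∧ 𝒬 ⊆ C}

/-- Points of a model indistinguishable by `k`-formulas of depth at most `d`. -/
def modEq {A X : Type} (R : A → X → X → Prop) (θ : ℕ → Set X) (k d : ℕ) (a b : X) : Prop :=
  ∀ φ : MF A, φ.varsBelow k → φ.depth ≤ d → (satM R θ a φ ↔ satM R θ b φ)

/-- Points of a model indistinguishable by all `k`-formulas. -/
def modEqAll {A X : Type} (R : A → X → X → Prop) (θ : ℕ → Set X) (k : ℕ) (a b : X) : Prop :=
  ∀ φ : MF A, φ.varsBelow k → (satM R θ a φ ↔ satM R θ b φ)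

/-- The modal depth of the `k`-model `(X, R, θ)` is at most `d`. -/
def mdModelLE {A X : Type} (R : A → X → X → Prop) (θ : ℕ → Set X) (k d : ℕ) : Prop :=
  ∀ e : ℕ, modEq R θ k e ≠ modEq R θ k (e + 1) → e ≤ d

/-- Bundled Kripke frames over the alphabet `A`. -/
structure KFrame (A : Type) : Type 1 where
  W : Type
  R : A → W → W → Prop

/-- The logic of a class of Kripke frames. -/
def LogC {A : Type} (𝓕 : Set (KFrame A)) : Set (MF A) :=
  {φ | ∀ F ∈ 𝓕, validM F.R φ}

/-- `Y` is an upset of the frame: `R_◇[Y] ⊆ Y` for every `◇`. -/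
def UpsetIn {A X : Type} (R : A → X → X → Prop) (Y : Set X) : Prop :=
  ∀ a : A, ∀ y ∈ Y, ∀ z, R a y z → z ∈ Y

/-- The relations of a frame restricted to a subset. -/
def restrR {A X : Type} (R : A → X → X → Prop) (Y : Set X) : A → Y → Y → Prop :=
  fun a u v => R a u.val v.val

/-- A valuation restricted to a subset. -/
def restrV {X : Type} (θ : ℕ → Set X) (Y : Set X) : ℕ → Set Y :=
  fun n => {u | u.val ∈ θ n}

/-- The restriction `F ↾ Y` of a frame to a subset of its domain. -/
def KFrame.restrict {A : Type} (F : KFrame A) (Y : Set F.W) : KFrame A :=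
  ⟨Y, restrR F.R Y⟩

/-- The induced partitions `𝒱_d`: `𝒱₀ = X/≡_𝒱` and `𝒱_{d+1}` is the quotient by
the family `𝒱_d ∪ {R_◇⁻¹[V] : ◇ ∈ A, V ∈ 𝒱_d}`. -/
def stageClasses {A X : Type} (R : A → X → X → Prop) (𝒱 : Set (Set X)) : ℕ → Set (Set X)
  | 0 => eqClasses (famEq 𝒱)
  | d + 1 =>
      eqClasses (famEq (stageClasses R 𝒱 d ∪
        {V' | ∃ a : A, ∃ V ∈ stageClasses R 𝒱 d, V' = diaPre (R a) V}))

/-- `𝒱_ω = ⋃_d 𝒱_d`. -/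
def stageUnion {A X : Type} (R : A → X → X → Prop) (𝒱 : Set (Set X)) : Set (Set X) :=
  ⋃ d : ℕ, stageClasses R 𝒱 d

/-- `md(V) = min {d ∣ V ∈ 𝒱_d}` (as an extended natural). -/
noncomputable def mdBlock {A X : Type} (R : A → X → X → Prop) (𝒱 : Set (Set X))
    (V : Set X) : ℕ∞ :=
  ⨅ d ∈ {d : ℕ | V ∈ stageClasses R 𝒱 d}, (d : ℕ∞)

/-- `md(𝒱) = sup {md(V) ∣ V ∈ 𝒱_ω}`. -/
noncomputable def mdFam {A X : Type} (R : A → X → X → Prop) (𝒱 : Set (Set X)) : ℕ∞ :=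
  ⨆ V ∈ stageUnion R 𝒱, mdBlock R 𝒱 V

/-- The modal depth of a frame: `sup` of `md(𝒱)` over finite families `𝒱`. -/
noncomputable def mdFrame {A : Type} (F : KFrame A) : ℕ∞ :=
  ⨆ 𝒱 ∈ {𝒱 : Set (Set F.W) | 𝒱.Finite}, mdFam F.R 𝒱

/-- The modal depth of a class of frames. -/
noncomputable def mdClass {A : Type} (𝓕 : Set (KFrame A)) : ℕ∞ :=
  ⨆ F ∈ 𝓕, mdFrame F

/-- `md(L) = sup_φ min {md(ψ) ∣ φ ↔ ψ ∈ L}`. -/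
noncomputable def mdLogic {A : Type} (L : Set (MF A)) : ℕ∞ :=
  ⨆ φ : MF A, ⨅ ψ ∈ {ψ : MF A | MF.iff φ ψ ∈ L}, (ψ.depth : ℕ∞)

/-- `tra(𝓕)`: the least `m` such that every frame in `𝓕` is `m`-transitive. -/
noncomputable def traClass {A : Type} (𝓕 : Set (KFrame A)) : ℕ∞ :=
  ⨅ m ∈ {m : ℕ | ∀ F ∈ 𝓕, mTransitive (unionRel F.R) m}, (m : ℕ∞)

/-- The disjoint sum of a family of frames. -/
def disjSum {A I : Type} (F : I → KFrame A) : KFrame A where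
  W := Σ i : I, (F i).W
  R a x y := ∃ (i : I) (u v : (F i).W), x = ⟨i, u⟩ ∧ y = ⟨i, v⟩ ∧ (F i).R a u v

/-- The cluster of a point: its equivalence class under `a R* b ∧ b R* a`. -/
def clusterOf {X : Type} (R : X → X → Prop) (x : X) : Set X :=
  {y | relStar R x y ∧ relStar R y x}

/-- `clust(𝓕)`: the restrictions of frames in `𝓕` to their clusters. -/
def clustC {A : Type} (𝓕 : Set (KFrame A)) : Set (KFrame A) :=
  {G | ∃ F ∈ 𝓕, ∃ x : F.W, G = F.restrict (clusterOf (unionRel F.R) x)}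

/-! A finite `g`-tuned partition `𝒰` refining `≡_𝒬` yields the finite subalgebra of
`𝒰`-saturated sets (unions of blocks): they form a Boolean algebra containing `𝒬`, and since
`g_◇` preserves finite unions, `g_◇` of a saturated set is a union of sets `g_◇(U)`, `U ∈ 𝒰`,
each saturated by tunedness. Conversely, if the generated algebra `B` is finite, the classes
of `≡_B` are its atoms; they form a finite partition, and `g_◇` of an atom lies in `B`, hence is
a union of atoms. Part (2) follows by applying (1) to a finite partition `𝒱` itself, whose
`≡_𝒱`-classes refine `𝒱`. -/

section TunedPartition

variable {A X : Type}

theorem famEq_equivalence (𝒱 : Set (Set X)) : Equivalence (famEq 𝒱) where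
  refl _ _ _ := Iff.rfl
  symm h V hV := (h V hV).symm
  trans h h' V hV := (h V hV).trans (h' V hV)

theorem eqClasses_eq_classes {E : X → X → Prop} (hE : Equivalence E) :
    eqClasses E = (⟨E, hE⟩ : Setoid X).classes := by
  have hsymm : ∀ x, {y | E x y} = {y | E y x} := fun x => Set.ext fun _ => ⟨hE.symm, hE.symm⟩
  simp only [eqClasses, Setoid.classes, hsymm]

theorem isPartition_eqClasses {E : X → X → Prop} (hE : Equivalence E) :
    Setoid.IsPartition (eqClasses E) :=
  eqClasses_eq_classes hE ▸ Setoid.isPartition_classes _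

theorem finite_eqClasses_famEq {𝒱 : Set (Set X)} (h : 𝒱.Finite) :
    (eqClasses (famEq 𝒱)).Finite := by
  refine (h.finite_subsets.image fun T => {y | ∀ V ∈ 𝒱, y ∈ V ↔ V ∈ T}).subset ?_
  rintro _ ⟨x, rfl⟩
  refine ⟨{V ∈ 𝒱 | x ∈ V}, Set.sep_subset _ _, Set.ext fun y => ?_⟩
  exact forall₂_congr fun V hV => by simp [hV, Iff.comm]

theorem Refines.trans {𝒰 𝒱 𝒲 : Set (Set X)} (h₁ : Refines 𝒰 𝒱) (h₂ : Refines 𝒱 𝒲) :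
    Refines 𝒰 𝒲 := fun U hU =>
  let ⟨V, hV, hUV⟩ := h₁ U hU
  let ⟨W, hW, hVW⟩ := h₂ V hV
  ⟨W, hW, hUV.trans hVW⟩

theorem refines_eqClasses_famEq_of_subset {𝒬 𝒱 : Set (Set X)} (h : 𝒬 ⊆ 𝒱) :
    Refines (eqClasses (famEq 𝒱)) (eqClasses (famEq 𝒬)) := by
  rintro _ ⟨x, rfl⟩
  exact ⟨_, ⟨x, rfl⟩, fun y hy V hV => hy V (h hV)⟩

theorem Setoid.IsPartition.refines_eqClasses_famEq {𝒱 : Set (Set X)}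
    (h : Setoid.IsPartition 𝒱) : Refines (eqClasses (famEq 𝒱)) 𝒱 := by
  rintro _ ⟨x, rfl⟩
  obtain ⟨V, ⟨hV, hxV⟩, -⟩ := h.2 x
  exact ⟨V, hV, fun y hy => (hy V hV).mp hxV⟩

def saturatedSets (𝒰 : Set (Set X)) : Set (Set X) :=
  {S | ∀ V ∈ 𝒰, (V ∩ S).Nonempty → V ⊆ S}

section Saturated

variable {𝒰 : Set (Set X)}

theorem sUnion_mem_saturatedSets {T : Set (Set X)} (hT : T ⊆ saturatedSets 𝒰) :
    ⋃₀ T ∈ saturatedSets 𝒰 := by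
  rintro V hV ⟨x, hxV, S, hST, hxS⟩
  exact (hT hST V hV ⟨x, hxV, hxS⟩).trans (Set.subset_sUnion_of_mem hST)

theorem inter_mem_saturatedSets {S T : Set X} (hS : S ∈ saturatedSets 𝒰)
    (hT : T ∈ saturatedSets 𝒰) : S ∩ T ∈ saturatedSets 𝒰 := by
  rintro V hV ⟨x, hxV, hxS, hxT⟩
  exact Set.subset_inter (hS V hV ⟨x, hxV, hxS⟩) (hT V hV ⟨x, hxV, hxT⟩)

theorem compl_mem_saturatedSets {S : Set X} (hS : S ∈ saturatedSets 𝒰) :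
    Sᶜ ∈ saturatedSets 𝒰 := by
  rintro V hV ⟨x, hxV, hxS⟩ y hyV hyS
  exact hxS (hS V hV ⟨y, hyV, hyS⟩ hxV)

theorem sUnion_blocks_of_mem_saturatedSets (hcov : ⋃₀ 𝒰 = Set.univ) {S : Set X}
    (hS : S ∈ saturatedSets 𝒰) : ⋃₀ {U ∈ 𝒰 | U ⊆ S} = S := by
  refine Set.Subset.antisymm (Set.sUnion_subset fun U hU => hU.2) fun x hxS => ?_
  obtain ⟨U, hU, hxU⟩ := Set.sUnion_eq_univ_iff.mp hcov x
  exact ⟨U, ⟨hU, hS U hU ⟨x, hxU, hxS⟩⟩, hxU⟩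

theorem finite_saturatedSets (hcov : ⋃₀ 𝒰 = Set.univ) (hfin : 𝒰.Finite) :
    (saturatedSets 𝒰).Finite :=
  (hfin.finite_subsets.image Set.sUnion).subset fun _ hS =>
    ⟨_, Set.sep_subset _ _, sUnion_blocks_of_mem_saturatedSets hcov hS⟩

theorem Refines.saturatedSets_subset {𝒱 : Set (Set X)} (h : Refines 𝒰 𝒱) :
    saturatedSets 𝒱 ⊆ saturatedSets 𝒰 := by
  rintro S hS U hU ⟨x, hxU, hxS⟩
  obtain ⟨V, hV, hUV⟩ := h U hU
  exact hUV.trans (hS V hV ⟨x, hUV hxU, hxS⟩)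

theorem mem_saturatedSets_eqClasses_famEq {𝒱 : Set (Set X)} {W : Set X} (hW : W ∈ 𝒱) :
    W ∈ saturatedSets (eqClasses (famEq 𝒱)) := by
  rintro _ ⟨x, rfl⟩ ⟨z, hxz, hzW⟩ y hxy
  exact (hxy W hW).mp ((hxz W hW).mpr hzW)

end Saturated

theorem map_sUnion_of_map_union {f : Set X → Set X} (h0 : f ∅ = ∅)
    (hf : ∀ U V, f (U ∪ V) = f U ∪ f V) {T : Set (Set X)} (hT : T.Finite) :
    f (⋃₀ T) = ⋃₀ (f '' T) := by
  induction T, hT using Set.Finite.induction_on with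
  | empty => simp [h0]
  | insert _ _ ih => rw [Set.sUnion_insert, hf, ih, Set.image_insert_eq, Set.sUnion_insert]

variable {g : A → Set X → Set X}

theorem isSubalg_saturatedSets (hg0 : ∀ a : A, g a ∅ = ∅)
    (hgU : ∀ (a : A) (U V : Set X), g a (U ∪ V) = g a U ∪ g a V) {𝒰 : Set (Set X)}
    (hcov : ⋃₀ 𝒰 = Set.univ) (hfin : 𝒰.Finite) (htun : gTuned g 𝒰) :
    IsSubalg g (saturatedSets 𝒰) := by
  refine ⟨fun _ _ ⟨_, _, h⟩ => h.elim, fun _ _ _ => Set.subset_univ _, fun _ hS _ hT => ?_,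
    fun _ hS _ hT => inter_mem_saturatedSets hS hT, fun _ hS => compl_mem_saturatedSets hS,
    fun S hS a => ?_⟩
  · rw [← Set.sUnion_pair]
    exact sUnion_mem_saturatedSets (Set.pair_subset hS hT)
  · rw [← sUnion_blocks_of_mem_saturatedSets hcov hS,
      map_sUnion_of_map_union (hg0 a) (hgU a) (hfin.subset (Set.sep_subset _ _))]
    exact sUnion_mem_saturatedSets (Set.image_subset_iff.mpr fun U hU => htun a U hU.1)

theorem IsSubalg.sInter {𝒞 : Set (Set (Set X))} (h : ∀ C ∈ 𝒞, IsSubalg g C) :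
    IsSubalg g (⋂₀ 𝒞) := by
  simp only [IsSubalg, Set.mem_sInter]
  exact ⟨fun C hC => (h C hC).1, fun C hC => (h C hC).2.1,
    fun U hU V hV C hC => (h C hC).2.2.1 U (hU C hC) V (hV C hC),
    fun U hU V hV C hC => (h C hC).2.2.2.1 U (hU C hC) V (hV C hC),
    fun U hU C hC => (h C hC).2.2.2.2.1 U (hU C hC),
    fun U hU a C hC => (h C hC).2.2.2.2.2 U (hU C hC) a⟩

theorem isSubalg_genAlg (g : A → Set X → Set X) (𝒬 : Set (Set X)) :
    IsSubalg g (genAlg g 𝒬) :=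
  IsSubalg.sInter fun _ hC => hC.1

theorem subset_genAlg (g : A → Set X → Set X) (𝒬 : Set (Set X)) : 𝒬 ⊆ genAlg g 𝒬 :=
  fun _ hQ => Set.mem_sInter.mpr fun _ hC => hC.2 hQ

theorem genAlg_subset {𝒬 C : Set (Set X)} (hC : IsSubalg g C) (h𝒬 : 𝒬 ⊆ C) :
    genAlg g 𝒬 ⊆ C :=
  Set.sInter_subset_of_mem ⟨hC, h𝒬⟩

theorem IsSubalg.sInter_mem {C : Set (Set X)} (hC : IsSubalg g C) {F : Set (Set X)}
    (hF : F.Finite) (hFC : F ⊆ C) : ⋂₀ F ∈ C := by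
  induction F, hF using Set.Finite.induction_on with
  | empty => simpa using hC.2.1
  | @insert W F _ _ ih =>
    rw [Set.sInter_insert]
    exact hC.2.2.2.1 W (hFC (Set.mem_insert W F)) _ (ih ((Set.subset_insert W F).trans hFC))

theorem IsSubalg.famEq_class_mem {C : Set (Set X)} (hC : IsSubalg g C) (hfin : C.Finite)
    (x : X) : {y | famEq C x y} ∈ C := by
  -- closure under complement turns "`x ∈ W → y ∈ W` for all `W ∈ C`" into `famEq C x y`
  have hclass : {y | famEq C x y} = ⋂₀ {W ∈ C | x ∈ W} := by
    ext y
    simp only [Set.mem_ofPred_eq, Set.mem_sInter]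
    refine ⟨fun h W hW => (h W hW.1).mp hW.2, fun h W hW => ⟨fun hxW => h W ⟨hW, hxW⟩,
      fun hyW => by_contra fun hxW => h Wᶜ ⟨hC.2.2.2.2.1 W hW, hxW⟩ hyW⟩⟩
  rw [hclass]
  exact hC.sInter_mem (hfin.subset (Set.sep_subset _ _)) (Set.sep_subset _ _)

theorem finite_genAlg_iff (hg0 : ∀ a : A, g a ∅ = ∅)
    (hgU : ∀ (a : A) (U V : Set X), g a (U ∪ V) = g a U ∪ g a V) (𝒬 : Set (Set X)) :
    (genAlg g 𝒬).Finite ↔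
      ∃ 𝒰 : Set (Set X), Setoid.IsPartition 𝒰 ∧ 𝒰.Finite ∧
        Refines 𝒰 (eqClasses (famEq 𝒬)) ∧ gTuned g 𝒰 := by
  constructor
  · intro hfin
    refine ⟨eqClasses (famEq (genAlg g 𝒬)), isPartition_eqClasses (famEq_equivalence _),
      finite_eqClasses_famEq hfin, refines_eqClasses_famEq_of_subset (subset_genAlg g 𝒬), ?_⟩
    rintro a _ ⟨x, rfl⟩
    have hx := (isSubalg_genAlg g 𝒬).famEq_class_mem hfin x
    exact mem_saturatedSets_eqClasses_famEq ((isSubalg_genAlg g 𝒬).2.2.2.2.2 _ hx a)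
  · rintro ⟨𝒰, hpart, hfin, href, htun⟩
    refine (finite_saturatedSets hpart.sUnion_eq_univ hfin).subset (genAlg_subset
      (isSubalg_saturatedSets hg0 hgU hpart.sUnion_eq_univ hfin htun) fun Q hQ => ?_)
    exact href.saturatedSets_subset (mem_saturatedSets_eqClasses_famEq hQ)

end TunedPartition

theorem stmt1_general {A X : Type} (g : A → Set X → Set X)
    (hg0 : ∀ a : A, g a ∅ = ∅)
    (hgU : ∀ (a : A) (U V : Set X), g a (U ∪ V) = g a U ∪ g a V) :
    (∀ 𝒬 : Set (Set X), 𝒬.Finite →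
      ((genAlg g 𝒬).Finite ↔
        ∃ 𝒰 : Set (Set X), Setoid.IsPartition 𝒰 ∧ 𝒰.Finite ∧
          Refines 𝒰 (eqClasses (famEq 𝒬)) ∧ gTuned g 𝒰))
    ∧
    ((∀ 𝒬 : Set (Set X), 𝒬.Finite → (genAlg g 𝒬).Finite) ↔
      (∀ 𝒱 : Set (Set X), Setoid.IsPartition 𝒱 → 𝒱.Finite →
        ∃ 𝒰 : Set (Set X), Setoid.IsPartition 𝒰 ∧ 𝒰.Finite ∧
          Refines 𝒰 𝒱 ∧ gTuned g 𝒰)) := by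
  refine ⟨fun 𝒬 _ => finite_genAlg_iff hg0 hgU 𝒬, fun hloc 𝒱 hpart hfin => ?_,
    fun htun 𝒬 h𝒬 => ?_⟩
  · obtain ⟨𝒰, h𝒰, hfin𝒰, href, htuned⟩ := (finite_genAlg_iff hg0 hgU 𝒱).mp (hloc 𝒱 hfin)
    exact ⟨𝒰, h𝒰, hfin𝒰, href.trans hpart.refines_eqClasses_famEq, htuned⟩
  · exact (finite_genAlg_iff hg0 hgU 𝒬).mpr
      (htun _ (isPartition_eqClasses (famEq_equivalence 𝒬)) (finite_eqClasses_famEq h𝒬))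

/-- For normal operators `g_◇` on `𝒫(X)`:
(1) the subalgebra generated by a finite family `𝒬` is finite iff there is a finite
`g`-tuned partition refining `X/≡_𝒬`;
(2) the algebra `(𝒫(X), (g_◇))` is locally finite iff it is tunable. -/
theorem stmt1 {A X : Type} [Fintype A] (g : A → Set X → Set X)
    (hg0 : ∀ a : A, g a ∅ = ∅)
    (hgU : ∀ (a : A) (U V : Set X), g a (U ∪ V) = g a U ∪ g a V) :
    (∀ 𝒬 : Set (Set X), 𝒬.Finite →
      ((genAlg g 𝒬).Finite ↔
        ∃ 𝒰 : Set (Set X), Setoid.IsPartition 𝒰 ∧ 𝒰.Finite ∧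
          Refines 𝒰 (eqClasses (famEq 𝒬)) ∧ gTuned g 𝒰))
    ∧
    ((∀ 𝒬 : Set (Set X), 𝒬.Finite → (genAlg g 𝒬).Finite) ↔
      (∀ 𝒱 : Set (Set X), Setoid.IsPartition 𝒱 → 𝒱.Finite →
        ∃ 𝒰 : Set (Set X), Setoid.IsPartition 𝒰 ∧ 𝒰.Finite ∧
          Refines 𝒰 𝒱 ∧ gTuned g 𝒰)) :=
  stmt1_general g hg0 hgU
end

section
/- Let F = (X,(R_◇)_{◇∈A}) be a Kripke frame over a finite alphabet A such that R_F = ⋃_{◇∈A} R_◇ is m-transitive. Then for every h < ω: the formula B_h^{≤m} is valid in F if and only if the height of F is at most h. -/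
set_option maxHeartbeats 1000000

section Stmt4Aux

open Classical

variable {A X : Type}

lemma satM_or (R : A → X → X → Prop) (θ : ℕ → Set X) (w : X) (φ ψ : MF A) :
    satM R θ w (MF.or φ ψ) ↔ satM R θ w φ ∨ satM R θ w ψ := by
  simp only [MF.or, MF.neg, satM]; tauto

lemma satM_bigOr (R : A → X → X → Prop) (θ : ℕ → Set X) (w : X) (l : List (MF A)) :
    satM R θ w (MF.bigOr l) ↔ ∃ φ ∈ l, satM R θ w φ := by
  induction l with
  | nil => simp [MF.bigOr, satM]
  | cons φ r ih => simp [MF.bigOr, satM_or, ih]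

lemma satM_diaS [Fintype A] (R : A → X → X → Prop) (θ : ℕ → Set X) (w : X) (φ : MF A) :
    satM R θ w (diaS (Finset.univ : Finset A) φ) ↔
      ∃ v, unionRel R w v ∧ satM R θ v φ := by
  simp only [diaS, satM_bigOr, List.mem_map, unionRel]
  constructor
  · rintro ⟨ψ, ⟨a, -, rfl⟩, hv⟩
    obtain ⟨v, hv, hs⟩ := hv
    exact ⟨v, ⟨a, hv⟩, hs⟩
  · rintro ⟨v, ⟨a, hv⟩, hs⟩
    exact ⟨MF.dia a φ, ⟨a, Finset.mem_toList.2 (Finset.mem_univ a), rfl⟩, ⟨v, hv, hs⟩⟩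

lemma satM_diaSpow [Fintype A] (R : A → X → X → Prop) (θ : ℕ → Set X) (i : ℕ)
    (w : X) (φ : MF A) :
    satM R θ w (diaSpow (Finset.univ : Finset A) i φ) ↔
      ∃ v, relPow (unionRel R) i w v ∧ satM R θ v φ := by
  induction i generalizing w with
  | zero =>
    simp [diaSpow, relPow]
  | succ n ih =>
    simp only [diaSpow, satM_diaS, ih, relPow]
    constructor
    · rintro ⟨u, hu, v, hv, hs⟩
      exact ⟨v, ⟨u, hu, hv⟩, hs⟩
    · rintro ⟨v, ⟨u, hu, hv⟩, hs⟩
      exact ⟨u, hu, v, hv, hs⟩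

lemma relPow_add {R : X → X → Prop} (i j : ℕ) (a c : X) :
    relPow R (i + j) a c ↔ ∃ b, relPow R i a b ∧ relPow R j b c := by
  induction i generalizing a with
  | zero => simp [relPow]
  | succ n ih =>
    have : n + 1 + j = (n + j) + 1 := by omega
    rw [this]
    simp only [relPow, ih]
    constructor
    · rintro ⟨b, hb, c', h1, h2⟩
      exact ⟨c', ⟨b, hb, h1⟩, h2⟩
    · rintro ⟨c', ⟨b, hb, h1⟩, h2⟩
      exact ⟨b, hb, c', h1, h2⟩

lemma relStar_of_mtrans {R : X → X → Prop} {m : ℕ} (hm : mTransitive R m) {a b : X} :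
    relStar R a b ↔ ∃ i ≤ m, relPow R i a b := by
  constructor
  · rintro ⟨n, hn⟩
    induction n using Nat.strong_induction_on generalizing a b with
    | _ n ih =>
      by_cases hle : n ≤ m
      · exact ⟨n, hle, hn⟩
      · have hsplit : n = (m + 1) + (n - (m + 1)) := by omega
        rw [hsplit, relPow_add] at hn
        obtain ⟨c, h1, h2⟩ := hn
        obtain ⟨i, hi, h1'⟩ := hm a c h1
        have : relPow R (i + (n - (m + 1))) a b :=
          (relPow_add _ _ _ _).2 ⟨c, h1', h2⟩
        exact ih (i + (n - (m + 1))) (by omega) this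
  · rintro ⟨i, -, hi⟩; exact ⟨i, hi⟩

lemma satM_diaSle [Fintype A] {R : A → X → X → Prop} {m : ℕ}
    (hm : mTransitive (unionRel R) m) (θ : ℕ → Set X) (w : X) (φ : MF A) :
    satM R θ w (diaSle (Finset.univ : Finset A) m φ) ↔
      ∃ v, relStar (unionRel R) w v ∧ satM R θ v φ := by
  simp only [diaSle, satM_bigOr, List.mem_map, List.mem_range]
  constructor
  · rintro ⟨ψ, ⟨i, hi, rfl⟩, hs⟩
    rw [satM_diaSpow] at hs
    obtain ⟨v, hv, hs⟩ := hs
    exact ⟨v, ⟨i, hv⟩, hs⟩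
  · rintro ⟨v, hv, hs⟩
    obtain ⟨i, hi, hv⟩ := (relStar_of_mtrans hm).1 hv
    exact ⟨diaSpow Finset.univ i φ, ⟨i, by omega, rfl⟩,
      (satM_diaSpow R θ i w φ).2 ⟨v, hv, hs⟩⟩

lemma satM_boxSle [Fintype A] {R : A → X → X → Prop} {m : ℕ}
    (hm : mTransitive (unionRel R) m) (θ : ℕ → Set X) (w : X) (φ : MF A) :
    satM R θ w (boxSle (Finset.univ : Finset A) m φ) ↔
      ∀ v, relStar (unionRel R) w v → satM R θ v φ := by
  simp only [boxSle, MF.neg, satM, satM_diaSle hm]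
  constructor
  · intro hb v hv
    by_contra hc
    exact hb ⟨v, hv, fun hs => hc hs⟩
  · rintro hb ⟨v, hv, hs⟩
    exact hs (hb v hv)

/-- Semantics of `B_h` over a transitive-reflexive relation `Q`. -/
def Bsem {X : Type} (Q : X → X → Prop) (θ : ℕ → Set X) : ℕ → X → Prop
  | 0, _ => False
  | h + 1, w => w ∈ θ (h + 1) →
      ∀ v, Q w v → ((∃ u, Q v u ∧ u ∈ θ (h + 1)) ∨ Bsem Q θ h v)

lemma satM_BstarS [Fintype A] {R : A → X → X → Prop} {m : ℕ}
    (hm : mTransitive (unionRel R) m) (θ : ℕ → Set X) (h : ℕ) (w : X) :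
    satM R θ w (BstarS (Finset.univ : Finset A) m h) ↔
      Bsem (relStar (unionRel R)) θ h w := by
  induction h generalizing w with
  | zero => exact Iff.rfl
  | succ n ih =>
    have eB : Bsem (relStar (unionRel R)) θ (n + 1) w =
        (w ∈ θ (n + 1) → ∀ v, relStar (unionRel R) w v →
          ((∃ u, relStar (unionRel R) v u ∧ u ∈ θ (n + 1)) ∨
            Bsem (relStar (unionRel R)) θ n v)) := rfl
    rw [eB]
    constructor
    · intro hs hw v hv
      have hbox : satM R θ w (boxSle (Finset.univ : Finset A) m
          (MF.or (diaSle Finset.univ m (.var (n + 1))) (BstarS Finset.univ m n))) := hs hw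
      have h2 := (satM_boxSle hm θ w _).1 hbox v hv
      rcases (satM_or R θ v _ _).1 h2 with hl | hr
      · obtain ⟨u, hu, hmu⟩ := (satM_diaSle hm θ v _).1 hl
        exact Or.inl ⟨u, hu, hmu⟩
      · exact Or.inr ((ih v).1 hr)
    · intro hs
      show w ∈ θ (n + 1) → _
      intro hw
      refine (satM_boxSle hm θ w _).2 ?_
      intro v hv
      refine (satM_or R θ v _ _).2 ?_
      rcases hs hw v hv with ⟨u, hu, hmu⟩ | hb
      · exact Or.inl ((satM_diaSle hm θ v _).2 ⟨u, hu, hmu⟩)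
      · exact Or.inr ((ih v).2 hb)

lemma relStar_refl (R : X → X → Prop) (a : X) : relStar R a a := ⟨0, rfl⟩

lemma relStar_trans {R : X → X → Prop} {a b c : X}
    (h1 : relStar R a b) (h2 : relStar R b c) : relStar R a c := by
  obtain ⟨n, h1⟩ := h1; obtain ⟨k, h2⟩ := h2
  exact ⟨n + k, (relPow_add _ _ _ _).2 ⟨b, h1, h2⟩⟩

lemma notBsem_of_chain {Q : X → X → Prop}
    (htr : ∀ a b c, Q a b → Q b c → Q a c) (hrefl : ∀ a, Q a a)
    {h : ℕ} (x : ℕ → X)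
    (hx : ∀ i < h, Q (x i) (x (i + 1)) ∧ ¬ Q (x (i + 1)) (x i)) :
    ∃ θ : ℕ → Set X, ¬ Bsem Q θ h (x 0) := by
  refine ⟨fun n => {y | Q (x (h - n)) y ∧ Q y (x (h - n))}, ?_⟩
  have key : ∀ j ≤ h, ¬ Bsem Q (fun n => {y | Q (x (h - n)) y ∧ Q y (x (h - n))}) j
      (x (h - j)) := by
    intro j
    induction j with
    | zero => intro _ hb; exact hb
    | succ k ihk =>
      intro hk hb
      have hstep := hx (h - (k + 1)) (by omega)
      have e : h - (k + 1) + 1 = h - k := by omega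
      rw [e] at hstep
      have hmem : x (h - (k + 1)) ∈ {y | Q (x (h - (k + 1))) y ∧ Q y (x (h - (k + 1)))} :=
        ⟨hrefl _, hrefl _⟩
      rcases hb hmem (x (h - k)) hstep.1 with ⟨u, hu, hu1, hu2⟩ | hB
      · exact hstep.2 (htr _ _ _ hu hu2)
      · exact ihk (by omega) hB
  have := key h le_rfl
  simpa using this

lemma chain_of_notBsem {Q : X → X → Prop} (θ : ℕ → Set X) {h : ℕ} {w : X}
    (hB : ¬ Bsem Q θ h w) :
    ∃ y : ℕ → X, y 0 = w ∧ ∀ i < h, Q (y i) (y (i + 1)) ∧ ¬ Q (y (i + 1)) (y i) := by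
  induction h generalizing w with
  | zero => exact ⟨fun _ => w, rfl, fun i hi => absurd hi (by omega)⟩
  | succ n ih =>
    simp only [Bsem] at hB
    push_neg at hB
    obtain ⟨hw, v, hQ, hnP, hnB⟩ := hB
    obtain ⟨y, hy0, hy⟩ := ih hnB
    refine ⟨fun i => if i = 0 then w else y (i - 1), rfl, ?_⟩
    intro i hi
    rcases Nat.eq_zero_or_pos i with rfl | hpos
    · simp only [if_pos rfl, if_neg (by omega : (1:ℕ) ≠ 0)]
      have : y (1 - 1) = v := by simpa using hy0
      rw [this]
      refine ⟨hQ, fun hvw => ?_⟩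
      exact hnP w hvw hw
    · have h1 : i ≠ 0 := by omega
      have h2 : i + 1 ≠ 0 := by omega
      simp only [if_neg h1, if_neg h2]
      have e : i + 1 - 1 = (i - 1) + 1 := by omega
      rw [e]
      exact hy (i - 1) (by omega)

end Stmt4Aux

/-- in a frame whose union relation is `m`-transitive, `B_h^{≤m}` is valid
iff the height of the frame is at most `h`. -/
theorem stmt4 {A X : Type} [Fintype A] (R : A → X → X → Prop) (m : ℕ)
    (hm : mTransitive (unionRel R) m) (h : ℕ) :
    validM R (BstarS (Finset.univ : Finset A) m h) ↔ heightLE (unionRel R) h := by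
  have hQ : ∀ θ w, satM R θ w (BstarS (Finset.univ : Finset A) m h) ↔
      Bsem (relStar (unionRel R)) θ h w := fun θ w => satM_BstarS hm θ h w
  constructor
  · intro hv
    rintro ⟨x, hx⟩
    obtain ⟨θ, hθ⟩ := notBsem_of_chain (fun a b c => relStar_trans)
      (relStar_refl _) x hx
    exact hθ ((hQ θ (x 0)).1 (hv θ (x 0)))
  · intro hh θ w
    rw [hQ]
    by_contra hB
    obtain ⟨y, -, hy⟩ := chain_of_notBsem θ hB
    exact hh ⟨y, hy⟩
end

section
/- If a normal modal logic L over a finite alphabet A is 1-finite, then L contains the pretransitivity formula atr_A(m) for some m < ω. -/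
set_option maxHeartbeats 1000000

section AuxStmt6

variable {A : Type}

lemma f_bigOr (f : MF A → Prop) (hb : ¬ f .bot)
    (hi : ∀ ψ χ, f (.imp ψ χ) ↔ (f ψ → f χ)) :
    ∀ l : List (MF A), (f (MF.bigOr l) ↔ ∃ χ ∈ l, f χ)
  | [] => by simpa [MF.bigOr] using hb
  | χ :: r => by
      have ih := f_bigOr f hb hi r
      simp only [MF.bigOr, MF.or, MF.neg, hi, ih, List.mem_cons]
      constructor
      · intro h
        by_cases hχ : f χ
        · exact ⟨χ, Or.inl rfl, hχ⟩
        · obtain ⟨ψ, hm, hf⟩ := h (fun hc => absurd hc hχ)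
          exact ⟨ψ, Or.inr hm, hf⟩
      · rintro ⟨ψ, hmem, hf⟩
        rcases hmem with rfl | hm
        · exact fun hc => absurd (hc hf) hb
        · exact fun _ => ⟨ψ, hm, hf⟩

lemma taut_mem_bigOr {χ : MF A} {l : List (MF A)} (h : χ ∈ l) :
    IsTautInstance (MF.imp χ (MF.bigOr l)) := by
  intro f hb hi
  rw [hi, f_bigOr f hb hi]
  exact fun hf => ⟨χ, h, hf⟩

lemma mem_imp_trans {L : Set (MF A)} (hL : IsNormalLogic L) {α β γ : MF A}
    (h1 : MF.imp α β ∈ L) (h2 : MF.imp β γ ∈ L) : MF.imp α γ ∈ L := by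
  have ht : IsTautInstance (MF.imp (.imp α β) (.imp (.imp β γ) (.imp α γ))) := by
    intro f hb hi; simp only [hi]; tauto
  exact hL.mp (hL.mp (hL.taut _ ht) h1) h2

lemma iff_mem_imp {L : Set (MF A)} (hL : IsNormalLogic L) {α β : MF A}
    (h : MF.iff α β ∈ L) : MF.imp α β ∈ L := by
  have ht : IsTautInstance (MF.imp (MF.iff α β) (.imp α β)) := by
    intro f hb hi; simp only [MF.iff, MF.and, MF.neg, hi]; tauto
  exact hL.mp (hL.taut _ ht) h

lemma iff_mem_impr {L : Set (MF A)} (hL : IsNormalLogic L) {α β : MF A}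
    (h : MF.iff α β ∈ L) : MF.imp β α ∈ L := by
  have ht : IsTautInstance (MF.imp (MF.iff α β) (.imp β α)) := by
    intro f hb hi; simp only [MF.iff, MF.and, MF.neg, hi]; tauto
  exact hL.mp (hL.taut _ ht) h

lemma varsBelow_bigOr {k : ℕ} :
    ∀ {l : List (MF A)}, (∀ φ ∈ l, MF.varsBelow k φ) → MF.varsBelow k (MF.bigOr l)
  | [], _ => trivial
  | φ :: r, h =>
      ⟨⟨h φ (by simp), trivial⟩, varsBelow_bigOr fun ψ hψ => h ψ (by simp [hψ])⟩

lemma varsBelow_diaS {k : ℕ} {S : Finset A} {φ : MF A} (h : MF.varsBelow k φ) :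
    MF.varsBelow k (diaS S φ) := by
  apply varsBelow_bigOr
  intro ψ hψ
  simp only [List.mem_map] at hψ
  obtain ⟨a, _, rfl⟩ := hψ
  exact h

lemma varsBelow_diaSpow {k : ℕ} {S : Finset A} {φ : MF A} (h : MF.varsBelow k φ) :
    ∀ n, MF.varsBelow k (diaSpow S n φ)
  | 0 => h
  | n + 1 => varsBelow_diaS (varsBelow_diaSpow h n)

lemma varsBelow_diaSle {k : ℕ} {S : Finset A} {φ : MF A} (h : MF.varsBelow k φ) (m : ℕ) :
    MF.varsBelow k (diaSle S m φ) := by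
  apply varsBelow_bigOr
  intro ψ hψ
  simp only [List.mem_map, List.mem_range] at hψ
  obtain ⟨i, _, rfl⟩ := hψ
  exact varsBelow_diaSpow h i

end AuxStmt6

/-- every 1-finite normal modal logic over a finite alphabet contains a
pretransitivity formula `atr_A(m)`. -/
theorem stmt6 {A : Type} [Fintype A] (L : Set (MF A)) (hL : IsNormalLogic L)
    (h1 : kFinite L 1) :
    ∃ m : ℕ, atrS (Finset.univ : Finset A) m ∈ L := by
  obtain ⟨T, hT⟩ := h1
  have hv : ∀ n : ℕ, (diaSle (Finset.univ : Finset A) n (.var 0)).varsBelow 1 :=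
    fun n => varsBelow_diaSle (show (MF.var 0 : MF A).varsBelow 1 from Nat.zero_lt_one) n
  choose rep hmem hiff using fun n => hT _ (hv n)
  have hcard : Fintype.card {x // x ∈ T} < Fintype.card (Fin (T.card + 1)) := by
    simp [Fintype.card_coe]
  obtain ⟨i, j, hne, heq⟩ := Fintype.exists_ne_map_eq_of_card_lt
    (fun i : Fin (T.card + 1) => (⟨rep i, hmem i⟩ : {x // x ∈ T})) hcard
  have hrepeq : rep i = rep j := congrArg Subtype.val heq
  have key : ∀ n n' : ℕ, n < n' → rep n = rep n' →
      atrS (Finset.univ : Finset A) n ∈ L := by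
    intro n n' hlt hre
    have h1' : MF.imp (diaSpow Finset.univ (n+1) (.var 0))
        (diaSle Finset.univ n' (.var 0)) ∈ L := by
      apply hL.taut
      apply taut_mem_bigOr
      simp only [List.mem_map, List.mem_range]
      exact ⟨n+1, by omega, rfl⟩
    have h2' : MF.imp (diaSle Finset.univ n' (.var 0)) (rep n') ∈ L :=
      iff_mem_imp hL (hiff n')
    have h3' : MF.imp (rep n) (diaSle Finset.univ n (.var 0)) ∈ L :=
      iff_mem_impr hL (hiff n)
    rw [hre] at h3'
    exact mem_imp_trans hL (mem_imp_trans hL h1' h2') h3'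
  rcases lt_trichotomy (i : ℕ) (j : ℕ) with h | h | h
  · exact ⟨i, key i j h hrepeq⟩
  · exact absurd (Fin.ext h) hne
  · exact ⟨j, key j i h hrepeq.symm⟩
end

section
/- (Maksimova) Every 1-finite transitive normal unimodal logic is locally tabular: if a normal unimodal logic L contains ◇◇p_0 → ◇p_0 and is 1-finite, then L is k-finite for every k < ω. -/
set_option maxHeartbeats 1000000

/-!
In the canonical model of `L` (complete theories, with `v R w` iff `◇φ ∈ v` whenever `φ ∈ w`)
axiom 4 makes `R` transitive. The one-variable formulas `A_m = ±p ∧ ◇(∓p ∧ ◇(… ◇p))` satisfy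
`A_{m+2} → A_m`, and by 1-finiteness two of the `A_{2j}` are equivalent, whence
`A_n ↔ A_{n+2} ∈ L` for some `n`. This bounds the height of the canonical model by `n`: along a
strict chain `v_0 R … R v_n` pick `γ_i` true at `v_i` but neither true nor possible at `v_{i+1}`.
The least `i` with `γ_i ∨ ◇γ_i` is an `R`-monotone rank equal to `j` at `v_j`; substituting for
`p` the formula "the rank has the parity of `n`" makes `A_n` true at `v_0`, while `A_{n+2}` would
force `n + 2` strict increases of the rank.

The `k`-type of a theory is computed from the sets of true variables in its cluster and the
`k`-types of its strict successors, so by induction on the height only finitely many `k`-types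
occur; a `k`-formula is determined up to `L`-equivalence by the `k`-types containing it.
-/

namespace MF

variable {A : Type}

structure IsBoolVal (f : MF A → Prop) : Prop where
  not_bot : ¬ f .bot
  imp_iff : ∀ φ ψ, f (.imp φ ψ) ↔ (f φ → f ψ)

namespace IsBoolVal

variable {f : MF A → Prop} (hf : IsBoolVal f)
include hf

theorem neg_iff (φ : MF A) : f φ.neg ↔ ¬ f φ := by
  simp only [MF.neg, hf.imp_iff, iff_false_intro hf.not_bot]

theorem top : f MF.top := by
  simp only [MF.top, hf.neg_iff, hf.not_bot, not_false_eq_true]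

theorem or_iff (φ ψ : MF A) : f (φ.or ψ) ↔ f φ ∨ f ψ := by
  simp only [MF.or, hf.imp_iff, hf.neg_iff]; tauto

theorem and_iff (φ ψ : MF A) : f (φ.and ψ) ↔ f φ ∧ f ψ := by
  simp only [MF.and, hf.imp_iff, hf.neg_iff]; tauto

theorem iff_iff (φ ψ : MF A) : f (φ.iff ψ) ↔ (f φ ↔ f ψ) := by
  simp only [MF.iff, hf.and_iff, hf.imp_iff]; tauto

theorem bigAnd_iff (l : List (MF A)) : f (bigAnd l) ↔ ∀ φ ∈ l, f φ := by
  induction l with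
  | nil => simp [bigAnd, hf.top]
  | cons φ l ih => simp [bigAnd, hf.and_iff, ih]

end IsBoolVal

end MF

variable {A : Type}

namespace IsNormalLogic

variable {L : Set (MF A)} (hL : IsNormalLogic L)
include hL

theorem mem_of_taut {φ : MF A} (h : ∀ f, MF.IsBoolVal f → f φ) : φ ∈ L :=
  hL.taut φ fun f hb hi => h f ⟨hb, hi⟩

theorem mp₂ {φ ψ χ : MF A} (h : MF.imp φ (MF.imp ψ χ) ∈ L) (hφ : φ ∈ L) (hψ : ψ ∈ L) :
    χ ∈ L :=
  hL.mp (hL.mp h hφ) hψ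

end IsNormalLogic

def Derives (L Γ : Set (MF A)) (φ : MF A) : Prop :=
  ∃ l : List (MF A), (∀ ψ ∈ l, ψ ∈ Γ) ∧ MF.imp (MF.bigAnd l) φ ∈ L

def Consistent (L Γ : Set (MF A)) : Prop := ¬ Derives L Γ .bot

section Derives

variable {L Γ : Set (MF A)} {φ ψ : MF A} (hL : IsNormalLogic L)
include hL

theorem derives_of_mem (h : φ ∈ Γ) : Derives L Γ φ :=
  ⟨[φ], by simpa using h, hL.mem_of_taut fun f hf => by simp [hf.imp_iff, hf.bigAnd_iff]⟩

theorem derives_of_mem_logic (h : φ ∈ L) : Derives L Γ φ :=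
  ⟨[], by simp, hL.mp (hL.mem_of_taut fun f hf => by simp only [hf.imp_iff]; tauto) h⟩

theorem Derives.mp (hψ : Derives L Γ (.imp φ ψ)) (hφ : Derives L Γ φ) : Derives L Γ ψ := by
  obtain ⟨l₁, hl₁, h₁⟩ := hψ
  obtain ⟨l₂, hl₂, h₂⟩ := hφ
  refine ⟨l₁ ++ l₂, by simpa [or_imp, forall_and] using ⟨hl₁, hl₂⟩,
    hL.mp₂ (hL.mem_of_taut fun f hf => ?_) h₁ h₂⟩
  simp only [hf.imp_iff, hf.bigAnd_iff, List.mem_append, or_imp, forall_and]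
  tauto

theorem Derives.imp_of_insert (h : Derives L (insert φ Γ) ψ) : Derives L Γ (.imp φ ψ) := by
  classical
  obtain ⟨l, hl, hψ⟩ := h
  refine ⟨l.filter (· ≠ φ), fun χ hχ => ?_, hL.mp (hL.mem_of_taut fun f hf => ?_) hψ⟩
  · obtain ⟨hχl, hχφ⟩ := List.mem_filter.1 hχ
    exact (hl χ hχl).resolve_left (by simpa using hχφ)
  · simp only [hf.imp_iff, hf.bigAnd_iff, List.mem_filter, decide_eq_true_eq, and_imp]
    intro hlψ hl' hφ
    exact hlψ fun χ hχ => if hχφ : χ = φ then hχφ ▸ hφ else hl' χ hχ hχφ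

theorem mem_of_derives_empty (h : Derives L ∅ φ) : φ ∈ L := by
  obtain ⟨l, hl, hφ⟩ := h
  obtain rfl : l = [] := List.eq_nil_iff_forall_not_mem.2 fun ψ hψ => hl ψ hψ
  exact hL.mp (hL.mem_of_taut fun f hf => by simp [hf.imp_iff, hf.bigAnd_iff]) hφ

end Derives

structure IsTheory (L : Set (MF A)) (v : MF A → Prop) : Prop extends MF.IsBoolVal v where
  of_mem : ∀ φ ∈ L, v φ

section Lindenbaum

variable {L Γ Δ : Set (MF A)}

theorem consistent_sUnion {c : Set (Set (MF A))} (hcons : ∀ Δ ∈ c, Consistent L Δ)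
    (hchain : IsChain (· ⊆ ·) c) (hne : c.Nonempty) : Consistent L (⋃₀ c) := by
  rintro ⟨l, hl, hbot⟩
  obtain ⟨Δ, hΔ, hlΔ⟩ := hchain.directedOn.exists_mem_subset_of_finite_of_subset_sUnion hne
    l.finite_toSet hl
  exact hcons Δ hΔ ⟨l, hlΔ, hbot⟩

theorem exists_maximal_consistent (hΓ : Consistent L Γ) :
    ∃ Δ, Γ ⊆ Δ ∧ Maximal (Consistent L) Δ :=
  zorn_subset_nonempty {Δ | Consistent L Δ}
    (fun c hc hchain hne => ⟨⋃₀ c, consistent_sUnion hc hchain hne,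
      fun _ => Set.subset_sUnion_of_mem⟩) Γ hΓ

variable (hL : IsNormalLogic L)
include hL

section Maximal

variable (hΔ : Maximal (Consistent L) Δ)
include hΔ

theorem Maximal.derives_neg_of_not_mem {φ : MF A} (hφ : φ ∉ Δ) : Derives L Δ φ.neg := by
  have : ¬ Consistent L (insert φ Δ) := fun hcons =>
    hφ (hΔ.eq_of_subset hcons (Set.subset_insert φ Δ) ▸ Set.mem_insert φ Δ)
  exact (not_not.1 this).imp_of_insert hL

theorem Maximal.mem_of_derives {φ : MF A} (h : Derives L Δ φ) : φ ∈ Δ :=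
  by_contra fun hφ => hΔ.prop ((hΔ.derives_neg_of_not_mem hL hφ).mp hL h)

theorem Maximal.isTheory : IsTheory L (· ∈ Δ) where
  not_bot hbot := hΔ.prop (derives_of_mem hL hbot)
  imp_iff φ ψ := by
    refine ⟨fun h hφ => hΔ.mem_of_derives hL
      ((derives_of_mem hL h).mp hL (derives_of_mem hL hφ)), fun h => ?_⟩
    by_cases hφ : φ ∈ Δ
    · exact hΔ.mem_of_derives hL <| (derives_of_mem_logic hL
        (hL.mem_of_taut fun f hf => by simp only [hf.imp_iff]; tauto)).mp hL
        (derives_of_mem hL (h hφ))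
    · exact hΔ.mem_of_derives hL <| (derives_of_mem_logic hL
        (hL.mem_of_taut fun f hf => by simp only [hf.imp_iff, hf.neg_iff]; tauto)).mp hL
        (hΔ.derives_neg_of_not_mem hL hφ)
  of_mem _ h := hΔ.mem_of_derives hL (derives_of_mem_logic hL h)

end Maximal

theorem exists_isTheory_of_consistent (hΓ : Consistent L Γ) :
    ∃ v, IsTheory L v ∧ ∀ φ ∈ Γ, v φ :=
  let ⟨Δ, hΓΔ, hΔ⟩ := exists_maximal_consistent hΓ
  ⟨(· ∈ Δ), hΔ.isTheory hL, hΓΔ⟩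

theorem mem_of_forall_isTheory {φ : MF A} (h : ∀ v, IsTheory L v → v φ) : φ ∈ L := by
  by_contra hφ
  have hcons : Consistent L {φ.neg} := fun hbot => hφ <| mem_of_derives_empty hL <|
    (derives_of_mem_logic hL (hL.mem_of_taut fun f hf => by
      simp only [MF.neg, hf.imp_iff, iff_false_intro hf.not_bot]; tauto)).mp hL
    ((show Derives L (insert φ.neg ∅) .bot by simpa using hbot).imp_of_insert hL)
  obtain ⟨v, hv, hφv⟩ := exists_isTheory_of_consistent hL hcons
  exact (hv.neg_iff φ).1 (hφv _ rfl) (h v hv)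

theorem iff_mem_of_forall_isTheory {φ ψ : MF A} (h : ∀ v, IsTheory L v → (v φ ↔ v ψ)) :
    MF.iff φ ψ ∈ L :=
  mem_of_forall_isTheory hL fun v hv => (hv.iff_iff φ ψ).2 (h v hv)

end Lindenbaum

def CanonicalRel (a : A) (v w : MF A → Prop) : Prop := ∀ φ, w φ → v (.dia a φ)

namespace IsTheory

variable {L : Set (MF A)} {v : MF A → Prop} (hv : IsTheory L v) {a : A} {φ ψ : MF A}
include hv

theorem mp_mem (h : MF.imp φ ψ ∈ L) (hφ : v φ) : v ψ := (hv.imp_iff φ ψ).1 (hv.of_mem _ h) hφ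

theorem iff_of_mem (h : MF.iff φ ψ ∈ L) : v φ ↔ v ψ := (hv.iff_iff φ ψ).1 (hv.of_mem _ h)

variable (hL : IsNormalLogic L)
include hL

theorem dia_mono (h : MF.imp φ ψ ∈ L) (hφ : v (.dia a φ)) : v (.dia a ψ) :=
  hv.mp_mem (hL.mono a h) hφ

theorem not_dia_bot : ¬ v (.dia a .bot) := (hv.neg_iff _).1 (hv.of_mem _ (hL.dia_bot a))

theorem dia_or (h : v (.dia a (φ.or ψ))) : v (.dia a φ) ∨ v (.dia a ψ) :=
  (hv.or_iff _ _).1 (hv.mp_mem (hL.subst_mem (fun n => if n = 0 then φ else ψ) (hL.dia_or a)) h)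

theorem not_dia_neg_bigAnd {l : List (MF A)}
    (hl : ∀ χ ∈ l, ∃ ψ, χ = ψ.neg ∧ ¬ v (.dia a ψ)) : ¬ v (.dia a (MF.bigAnd l).neg) := by
  induction l with
  | nil =>
    refine fun h => hv.not_dia_bot hL (hv.dia_mono hL (hL.mem_of_taut fun f hf => ?_) h)
    simp only [MF.bigAnd, hf.imp_iff, hf.neg_iff, hf.top]; tauto
  | cons χ l ih =>
    obtain ⟨ψ, rfl, hψ⟩ := hl χ List.mem_cons_self
    intro h
    have hor : MF.imp (MF.bigAnd (ψ.neg :: l)).neg (ψ.or (MF.bigAnd l).neg) ∈ L :=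
      hL.mem_of_taut fun f hf => by
        simp only [MF.bigAnd, hf.imp_iff, hf.neg_iff, hf.and_iff, hf.or_iff]; tauto
    rcases hv.dia_or hL (hv.dia_mono hL hor h) with h | h
    · exact hψ h
    · exact ih (fun χ hχ => hl χ (List.mem_cons_of_mem _ hχ)) h

theorem exists_canonicalRel (h : v (.dia a φ)) :
    ∃ w, IsTheory L w ∧ CanonicalRel a v w ∧ w φ := by
  set Γ := insert φ {χ | ∃ ψ, χ = ψ.neg ∧ ¬ v (.dia a ψ)}
  have hΓ : Consistent L Γ := fun hbot => by
    obtain ⟨l, hl, hφ⟩ := hbot.imp_of_insert hL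
    refine hv.not_dia_neg_bigAnd hL hl (hv.dia_mono hL (hL.mp ?_ hφ) h)
    exact hL.mem_of_taut fun f hf => by
      simp only [MF.neg, hf.imp_iff, iff_false_intro hf.not_bot]; tauto
  obtain ⟨w, hw, hΓw⟩ := exists_isTheory_of_consistent hL hΓ
  refine ⟨w, hw, fun ψ hψ => by_contra fun hψv => ?_, hΓw φ (Set.mem_insert φ _)⟩
  exact (hw.neg_iff ψ).1 (hΓw _ (Set.mem_insert_of_mem _ ⟨ψ, rfl, hψv⟩)) hψ

theorem dia_iff : v (.dia a φ) ↔ ∃ w, IsTheory L w ∧ CanonicalRel a v w ∧ w φ :=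
  ⟨hv.exists_canonicalRel hL, fun ⟨_, _, hvw, hw⟩ => hvw φ hw⟩

end IsTheory

namespace MF

def signed (φ : MF A) (t : ℕ) : MF A := if Even t then φ else φ.neg

def alternating (φ : MF Unit) : ℕ → MF Unit
  | 0 => φ
  | m + 1 => (signed φ (m + 1)).and (.dia () (alternating φ m))

theorem signed_add_two (φ : MF A) (t : ℕ) : signed φ (t + 2) = signed φ t := by
  simp [signed, Nat.even_add]

theorem varsBelow_alternating (m : ℕ) : ((var 0).alternating m).varsBelow 1 := by
  induction m with
  | zero => simp [alternating, varsBelow]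
  | succ m ih =>
    by_cases h : Even (m + 1) <;> simp [alternating, signed, varsBelow, MF.and, neg, h, ih]

theorem subst_alternating (σ : ℕ → MF Unit) (φ : MF Unit) (m : ℕ) :
    (φ.alternating m).subst σ = (φ.subst σ).alternating m := by
  induction m with
  | zero => rfl
  | succ m ih =>
    by_cases h : Even (m + 1) <;> simp [alternating, signed, subst, MF.and, neg, h, ih]

end MF

namespace IsTheory

variable {L : Set (MF Unit)} {v : MF Unit → Prop} (hv : IsTheory L v) {φ : MF Unit}
include hv

theorem signed_iff (t : ℕ) : v (φ.signed t) ↔ (v φ ↔ Even t) := by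
  by_cases h : Even t <;> simp [MF.signed, h, hv.neg_iff]

theorem signed_of_alternating {m : ℕ} (h : v (φ.alternating m)) : v (φ.signed m) := by
  cases m with
  | zero => simpa [MF.signed, MF.alternating] using h
  | succ m => exact ((hv.and_iff _ _).1 h).1

theorem alternating_of_add_two (hL : IsNormalLogic L) (m : ℕ) :
    v (φ.alternating (m + 2)) → v (φ.alternating m) := by
  induction m generalizing v with
  | zero => exact hv.signed_of_alternating
  | succ m ih =>
    intro h
    obtain ⟨hs, hd⟩ := (hv.and_iff _ _).1 h
    obtain ⟨w, hw, hvw, hwφ⟩ := (hv.dia_iff hL).1 hd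
    exact (hv.and_iff _ _).2
      ⟨MF.signed_add_two φ (m + 1) ▸ hs, (hv.dia_iff hL).2 ⟨w, hw, hvw, ih hw hwφ⟩⟩

theorem alternating_of_add_mul_two (hL : IsNormalLogic L) (m s : ℕ)
    (h : v (φ.alternating (m + 2 * s))) : v (φ.alternating m) := by
  induction s with
  | zero => exact h
  | succ s ih => exact ih (hv.alternating_of_add_two hL _ h)

end IsTheory

theorem exists_alternating_iff {L : Set (MF Unit)} (hL : IsNormalLogic L) (h1 : kFinite L 1) :
    ∃ n, MF.iff ((MF.var 0).alternating n) ((MF.var 0).alternating (n + 2)) ∈ L := by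
  obtain ⟨S, hS⟩ := h1
  choose g hgS hg using fun j => hS _ (MF.varsBelow_alternating (2 * j))
  obtain ⟨a, b, hab, hgab⟩ : ∃ a b, a < b ∧ g a = g b := by
    obtain ⟨a, b, hne, h⟩ := Finite.exists_ne_map_eq_of_infinite fun j => (⟨g j, hgS j⟩ : S)
    rcases hne.lt_or_gt with hlt | hlt
    exacts [⟨a, b, hlt, congrArg Subtype.val h⟩, ⟨b, a, hlt, congrArg Subtype.val h.symm⟩]
  refine ⟨2 * a, iff_mem_of_forall_isTheory hL fun v hv => ⟨fun ha => ?_,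
    hv.alternating_of_add_two hL _⟩⟩
  have hb : v ((MF.var 0).alternating (2 * a + 2 + 2 * (b - a - 1))) := by
    rw [show 2 * a + 2 + 2 * (b - a - 1) = 2 * b by omega, hv.iff_of_mem (hg b), ← hgab,
      ← hv.iff_of_mem (hg a)]
    exact ha
  exact hv.alternating_of_add_mul_two hL _ _ hb

namespace MF

def anyUpTo (ε : ℕ → MF A) : ℕ → MF A
  | 0 => ε 0
  | i + 1 => (anyUpTo ε i).or (ε (i + 1))

def firstParity (ε : ℕ → MF A) : ℕ → MF A
  | 0 => anyUpTo ε 0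
  | i + 1 => (anyUpTo ε (i + 1)).and (firstParity ε i).neg

end MF

/-- Junk value `0` when `f (ε t)` holds for no `t`. -/
noncomputable def firstIndex (ε : ℕ → MF A) (f : MF A → Prop) : ℕ := sInf {t | f (ε t)}

section FirstIndex

variable {ε : ℕ → MF A} {f : MF A → Prop} {t : ℕ}

theorem firstIndex_le (h : f (ε t)) : firstIndex ε f ≤ t := Nat.sInf_le h

theorem firstIndex_spec (h : ∃ t, f (ε t)) : f (ε (firstIndex ε f)) := Nat.sInf_mem h

theorem firstIndex_eq (h : f (ε t)) (hlt : ∀ s < t, ¬ f (ε s)) : firstIndex ε f = t :=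
  (firstIndex_le h).antisymm <| not_lt.1 fun hs => hlt _ hs (firstIndex_spec ⟨t, h⟩)

theorem firstIndex_mono {g : MF A → Prop} (hex : ∃ t, g (ε t))
    (h : ∀ t, g (ε t) → f (ε t)) : firstIndex ε f ≤ firstIndex ε g :=
  firstIndex_le (h _ (firstIndex_spec hex))

variable (hf : MF.IsBoolVal f)
include hf

theorem MF.IsBoolVal.anyUpTo_iff (i : ℕ) : f (MF.anyUpTo ε i) ↔ ∃ s ≤ i, f (ε s) := by
  induction i with
  | zero => simp [MF.anyUpTo]
  | succ i ih =>
    simp only [MF.anyUpTo, hf.or_iff, ih]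
    refine ⟨fun h => h.elim (fun ⟨s, hs, h⟩ => ⟨s, by omega, h⟩) fun h => ⟨i + 1, le_rfl, h⟩,
      fun ⟨s, hs, h⟩ => (Nat.le_succ_iff.1 hs).imp (fun hs => ⟨s, hs, h⟩) fun e => ?_⟩
    subst e
    exact h

theorem MF.IsBoolVal.firstParity_iff (hex : ∃ t, f (ε t)) (i : ℕ) :
    f (MF.firstParity ε i) ↔ firstIndex ε f ≤ i ∧ firstIndex ε f % 2 = i % 2 := by
  have hany : ∀ i, f (MF.anyUpTo ε i) ↔ firstIndex ε f ≤ i := fun i =>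
    (hf.anyUpTo_iff i).trans ⟨fun ⟨s, hs, h⟩ => (firstIndex_le h).trans hs,
      fun h => ⟨_, h, firstIndex_spec hex⟩⟩
  induction i with
  | zero => simp only [MF.firstParity, hany]; omega
  | succ i ih => simp only [MF.firstParity, hf.and_iff, hf.neg_iff, hany, ih]; omega

end FirstIndex

theorem IsTheory.eq_of_forall_imp {L : Set (MF A)} {u w : MF A → Prop} (hu : IsTheory L u)
    (hw : IsTheory L w) (h : ∀ φ, u φ → w φ) : u = w :=
  funext fun φ => propext ⟨h φ, fun hwφ => by_contra fun huφ =>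
    (hw.neg_iff φ).1 (h _ ((hu.neg_iff φ).2 huφ)) hwφ⟩

theorem IsTheory.exists_separating {L : Set (MF A)} (hL : IsNormalLogic L) {a : A}
    {u w : MF A → Prop} (hu : IsTheory L u) (hw : IsTheory L w) (huw : CanonicalRel a u w)
    (hwu : ¬ CanonicalRel a w u) : ∃ γ, u γ ∧ ¬ w γ ∧ ¬ w (.dia a γ) := by
  obtain ⟨α, huα, hwα⟩ : ∃ α, u α ∧ ¬ w (.dia a α) := by
    simpa [CanonicalRel] using hwu
  obtain ⟨β, huβ, hwβ⟩ : ∃ β, u β ∧ ¬ w β := by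
    by_contra! h
    obtain rfl := hu.eq_of_forall_imp hw h
    exact hwu huw
  refine ⟨α.and β, (hu.and_iff α β).2 ⟨huα, huβ⟩, fun h => hwβ ((hw.and_iff α β).1 h).2,
    fun h => hwα (hw.dia_mono hL (hL.mem_of_taut fun f hf => ?_) h)⟩
  simp only [hf.imp_iff, hf.and_iff]; tauto

section Transitive

def MF.four : MF Unit := .imp (.dia () (.dia () (.var 0))) (.dia () (.var 0))

variable {L : Set (MF Unit)} (hL : IsNormalLogic L) (htr : MF.four ∈ L)
include hL htr

theorem IsTheory.dia_of_dia_dia {u : MF Unit → Prop} (hu : IsTheory L u) {φ : MF Unit}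
    (h : u (.dia () (.dia () φ))) : u (.dia () φ) :=
  hu.mp_mem (hL.subst_mem (fun _ => φ) htr) h

theorem CanonicalRel.trans {u v w : MF Unit → Prop} (hu : IsTheory L u)
    (huv : CanonicalRel () u v) (hvw : CanonicalRel () v w) : CanonicalRel () u w :=
  fun _ hφ => hu.dia_of_dia_dia hL htr (huv _ (hvw _ hφ))

theorem IsTheory.dia_of_rel {u w : MF Unit → Prop} (hu : IsTheory L u) (hw : IsTheory L w)
    (huw : CanonicalRel () u w) {φ : MF Unit} (h : w (φ.or (.dia () φ))) : u (.dia () φ) :=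
  ((hw.or_iff _ _).1 h).elim (huw φ) fun h => hu.dia_of_dia_dia hL htr (huw _ h)

end Transitive

structure IsStrictChain (L : Set (MF Unit)) (c : ℕ → MF Unit → Prop) (n : ℕ) : Prop where
  isTheory : ∀ i ≤ n, IsTheory L (c i)
  rel : ∀ i < n, CanonicalRel () (c i) (c (i + 1))
  not_rel : ∀ i < n, ¬ CanonicalRel () (c (i + 1)) (c i)

namespace IsStrictChain

variable {L : Set (MF Unit)} {c : ℕ → MF Unit → Prop} {n : ℕ} (hc : IsStrictChain L c n)
  (hL : IsNormalLogic L)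
include hc

theorem cons {v : MF Unit → Prop} (hv : IsTheory L v) (hvc : CanonicalRel () v (c 0))
    (hcv : ¬ CanonicalRel () (c 0) v) :
    IsStrictChain L (fun | 0 => v | i + 1 => c i) (n + 1) where
  isTheory
    | 0, _ => hv
    | i + 1, hi => hc.isTheory i (by omega)
  rel
    | 0, _ => hvc
    | i + 1, hi => hc.rel i (by omega)
  not_rel
    | 0, _ => hcv
    | i + 1, hi => hc.not_rel i (by omega)

theorem alternating_of_parity {χ : MF Unit} (hχ : ∀ j ≤ n, c j χ ↔ j % 2 = n % 2) {m : ℕ}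
    (hm : m ≤ n) : c (n - m) (χ.alternating m) := by
  induction m with
  | zero => exact (hχ n le_rfl).2 rfl
  | succ m ih =>
    have hu := hc.isTheory (n - (m + 1)) (Nat.sub_le n _)
    refine (hu.and_iff _ _).2 ⟨(hu.signed_iff _).2 ?_, ?_⟩
    · rw [hχ _ (Nat.sub_le n _), Nat.even_iff]; omega
    · have hrel := hc.rel (n - (m + 1)) (by omega)
      rw [show n - (m + 1) + 1 = n - m by omega] at hrel
      exact hrel _ (ih (by omega))

include hL

theorem exists_separating : ∃ γ : ℕ → MF Unit,
    (∀ i < n, c i (γ i) ∧ ¬ c (i + 1) (γ i) ∧ ¬ c (i + 1) (.dia () (γ i))) ∧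
      ∀ i, n ≤ i → γ i = MF.top := by
  have : ∀ i, ∃ γ : MF Unit, (i < n → c i γ ∧ ¬ c (i + 1) γ ∧ ¬ c (i + 1) (.dia () γ)) ∧
      (n ≤ i → γ = MF.top) := fun i => by
    by_cases hi : i < n
    · obtain ⟨γ, hγ⟩ := (hc.isTheory i hi.le).exists_separating hL (hc.isTheory (i + 1) hi)
        (hc.rel i hi) (hc.not_rel i hi)
      exact ⟨γ, fun _ => hγ, fun h => absurd hi (not_lt.2 h)⟩
    · exact ⟨MF.top, fun h => absurd h hi, fun _ => rfl⟩
  choose γ hγ using this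
  exact ⟨γ, fun i hi => (hγ i).1 hi, fun i hi => (hγ i).2 hi⟩

variable (htr : MF.four ∈ L)
include htr

theorem rel_of_lt {j t : ℕ} (hjt : j < t) (htn : t ≤ n) : CanonicalRel () (c j) (c t) := by
  induction t with
  | zero => omega
  | succ t ih =>
    rcases (Nat.lt_succ_iff_lt_or_eq.1 hjt) with hj | rfl
    · exact CanonicalRel.trans hL htr (hc.isTheory j (by omega)) (ih hj (by omega))
        (hc.rel t htn)
    · exact hc.rel j htn

theorem firstIndex_eq {γ : ℕ → MF Unit}
    (hγ : ∀ i < n, c i (γ i) ∧ ¬ c (i + 1) (γ i) ∧ ¬ c (i + 1) (.dia () (γ i)))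
    (htop : ∀ i, n ≤ i → γ i = MF.top) {j : ℕ} (hj : j ≤ n) :
    firstIndex (fun t => (γ t).or (.dia () (γ t))) (c j) = j := by
  have hcj := hc.isTheory j hj
  refine _root_.firstIndex_eq ((hcj.or_iff _ _).2 (.inl ?_)) fun s hs h => ?_
  · rcases hj.lt_or_eq with hj | rfl
    exacts [(hγ j hj).1, htop _ le_rfl ▸ hcj.top]
  · obtain ⟨-, hγs, hdγs⟩ := hγ s (by omega)
    rcases (Nat.succ_le_of_lt hs).lt_or_eq with hsj | rfl
    · exact hdγs ((hc.isTheory (s + 1) (by omega)).dia_of_rel hL htr hcj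
        (hc.rel_of_lt hL htr hsj hj) h)
    · exact ((hcj.or_iff _ _).1 h).elim hγs hdγs

end IsStrictChain

/-- Consecutive points of a path witnessing `χ.alternating m` disagree on `χ`, hence on the
parity of the rank, so the rank strictly increases along the path. -/
theorem IsTheory.add_le_of_alternating {L : Set (MF Unit)} (hL : IsNormalLogic L)
    {r : (MF Unit → Prop) → ℕ} {χ : MF Unit} {n : ℕ}
    (hle : ∀ u, IsTheory L u → r u ≤ n)
    (hmono : ∀ u w, IsTheory L u → IsTheory L w → CanonicalRel () u w → r u ≤ r w)
    (hχ : ∀ u, IsTheory L u → (u χ ↔ r u % 2 = n % 2))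
    {u : MF Unit → Prop} (hu : IsTheory L u) {m : ℕ} (h : u (χ.alternating m)) :
    r u + m ≤ n := by
  induction m generalizing u with
  | zero => exact hle u hu
  | succ m ih =>
    obtain ⟨hs, hd⟩ := (hu.and_iff _ _).1 h
    obtain ⟨w, hw, huw, hwχ⟩ := (hu.dia_iff hL).1 hd
    have hu2 := (hu.signed_iff _).1 hs
    have hw2 := (hw.signed_iff _).1 (hw.signed_of_alternating hwχ)
    rw [hχ u hu, Nat.even_iff] at hu2
    rw [hχ w hw, Nat.even_iff] at hw2
    have := ih hw hwχ
    have := hmono u w hu hw huw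
    omega

theorem not_isStrictChain {L : Set (MF Unit)} (hL : IsNormalLogic L) (htr : MF.four ∈ L)
    {n : ℕ} (hA : MF.iff ((MF.var 0).alternating n) ((MF.var 0).alternating (n + 2)) ∈ L)
    (c : ℕ → MF Unit → Prop) : ¬ IsStrictChain L c n := by
  intro hc
  obtain ⟨γ, hγ, htop⟩ := hc.exists_separating hL
  set ε : ℕ → MF Unit := fun t => (γ t).or (.dia () (γ t))
  have hεn : ∀ u, IsTheory L u → u (ε n) := fun u hu =>
    (hu.or_iff _ _).2 (.inl (htop n le_rfl ▸ hu.top))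
  have hle : ∀ u, IsTheory L u → firstIndex ε u ≤ n := fun u hu => firstIndex_le (hεn u hu)
  have hχ : ∀ u, IsTheory L u →
      (u (MF.firstParity ε n) ↔ firstIndex ε u % 2 = n % 2) := fun u hu => by
    rw [hu.firstParity_iff ⟨n, hεn u hu⟩]
    exact and_iff_right (hle u hu)
  have hmono : ∀ u w, IsTheory L u → IsTheory L w → CanonicalRel () u w →
      firstIndex ε u ≤ firstIndex ε w := fun u w hu hw huw =>
    firstIndex_mono ⟨n, hεn w hw⟩ fun _ ht =>
      (hu.or_iff _ _).2 (.inr (hu.dia_of_rel hL htr hw huw ht))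
  have hc0 : c 0 ((MF.firstParity ε n).alternating n) := by
    simpa using hc.alternating_of_parity (fun j hj => by
      rw [hχ _ (hc.isTheory j hj), hc.firstIndex_eq hL htr hγ htop hj]) le_rfl
  have hσ : MF.iff (((MF.var 0).alternating n).subst fun _ => MF.firstParity ε n)
      (((MF.var 0).alternating (n + 2)).subst fun _ => MF.firstParity ε n) ∈ L :=
    hL.subst_mem _ hA
  simp only [MF.subst_alternating, MF.subst] at hσ
  have hc0' := ((hc.isTheory 0 n.zero_le).iff_of_mem hσ).1 hc0
  have := (hc.isTheory 0 n.zero_le).add_le_of_alternating hL hle hmono hχ hc0'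
  omega

namespace MF

def mask (k : ℕ) : ℕ → MF A := fun i => if i < k then var i else bot

theorem subst_mask_of_varsBelow {k : ℕ} {φ : MF A} (h : φ.varsBelow k) :
    φ.subst (mask k) = φ := by
  induction φ with
  | var i => simp [subst, mask, show i < k from h]
  | bot => rfl
  | imp φ ψ ihφ ihψ => simp [subst, ihφ h.1, ihψ h.2]
  | dia a φ ih => simp [subst, ih h]

end MF

def kType (k : ℕ) (v : MF A → Prop) : MF A → Prop := fun φ => v (φ.subst (MF.mask k))

def trueVars (k : ℕ) (v : MF A → Prop) : Set ℕ := {i | i < k ∧ v (.var i)}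

/-- Truth of `φ` at a point with true variables `p`, in a cluster realising the sets of true
variables in `P`, below strict successors with the `k`-types in `T`. -/
def clusterEval (P : Set (Set ℕ)) (T : Set (MF Unit → Prop)) : MF Unit → Set ℕ → Prop
  | .var i, p => i ∈ p
  | .bot, _ => False
  | .imp φ ψ, p => clusterEval P T φ p → clusterEval P T ψ p
  | .dia _ φ, _ => (∃ q ∈ P, clusterEval P T φ q) ∨ ∃ t ∈ T, t φ

def kTypeStage (k : ℕ) : ℕ → Set (MF Unit → Prop)
  | 0 => ∅
  | d + 1 => (fun x : Set (Set ℕ) × Set ℕ × Set (MF Unit → Prop) =>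
      fun φ => clusterEval x.1 x.2.2 φ x.2.1) ''
        (𝒫 𝒫 Set.Iio k ×ˢ 𝒫 Set.Iio k ×ˢ 𝒫 kTypeStage k d)

theorem kTypeStage_finite (k d : ℕ) : (kTypeStage k d).Finite := by
  induction d with
  | zero => exact Set.finite_empty
  | succ d ih =>
    exact ((Set.finite_Iio k).powerset.powerset.prod
      ((Set.finite_Iio k).powerset.prod ih.powerset)).image _

theorem trueVars_subset (k : ℕ) (v : MF A → Prop) : trueVars k v ⊆ Set.Iio k := fun _ h => h.1

section Stratification

variable {L : Set (MF Unit)} (hL : IsNormalLogic L) (htr : MF.four ∈ L)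
include hL htr

theorem IsTheory.kType_eq_clusterEval {v : MF Unit → Prop} (hv : IsTheory L v) (k : ℕ) :
    kType k v = fun φ => clusterEval
      (trueVars k '' {w | IsTheory L w ∧ CanonicalRel () v w ∧ CanonicalRel () w v})
      (kType k '' {w | IsTheory L w ∧ CanonicalRel () v w ∧ ¬ CanonicalRel () w v})
      φ (trueVars k v) := by
  suffices h : ∀ φ u, IsTheory L u → (∀ x, CanonicalRel () u x ↔ CanonicalRel () v x) →
      (kType k u φ ↔ clusterEval _ _ φ (trueVars k u)) from
    funext fun φ => propext (h φ v hv fun _ => Iff.rfl)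
  intro φ
  induction φ with
  | var i =>
    intro u hu _
    by_cases hi : i < k <;>
      simp [kType, trueVars, clusterEval, MF.mask, MF.subst, hi, hu.not_bot]
  | bot => exact fun u hu _ => iff_false_intro hu.not_bot
  | imp φ ψ ihφ ihψ =>
    exact fun u hu hsucc =>
      (hu.imp_iff _ _).trans (imp_congr (ihφ u hu hsucc) (ihψ u hu hsucc))
  | dia a φ ih =>
    intro u hu hsucc
    have hclust : ∀ w, IsTheory L w → CanonicalRel () v w → CanonicalRel () w v →
        ∀ x, CanonicalRel () w x ↔ CanonicalRel () v x := fun w hw hvw hwv x =>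
      ⟨CanonicalRel.trans hL htr hv hvw, CanonicalRel.trans hL htr hw hwv⟩
    change u (.dia a _) ↔ _
    rw [hu.dia_iff hL]
    constructor
    · rintro ⟨w, hw, huw, hwφ⟩
      have hvw := (hsucc w).1 huw
      by_cases hwv : CanonicalRel () w v
      · exact .inl ⟨_, ⟨w, ⟨hw, hvw, hwv⟩, rfl⟩, (ih w hw (hclust w hw hvw hwv)).1 hwφ⟩
      · exact .inr ⟨_, ⟨w, ⟨hw, hvw, hwv⟩, rfl⟩, hwφ⟩
    · rintro (⟨_, ⟨w, ⟨hw, hvw, hwv⟩, rfl⟩, hwφ⟩ | ⟨_, ⟨w, ⟨hw, hvw, -⟩, rfl⟩, hwφ⟩)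
      · exact ⟨w, hw, (hsucc w).2 hvw, (ih w hw (hclust w hw hvw hwv)).2 hwφ⟩
      · exact ⟨w, hw, (hsucc w).2 hvw, hwφ⟩

theorem IsTheory.kType_mem_kTypeStage (k d : ℕ) {v : MF Unit → Prop} (hv : IsTheory L v)
    (hchain : ∀ c, c 0 = v → ¬ IsStrictChain L c d) : kType k v ∈ kTypeStage k d := by
  induction d generalizing v with
  | zero => exact hchain (fun _ => v) rfl ⟨fun _ _ => hv, nofun, nofun⟩
  | succ d ih =>
    rw [hv.kType_eq_clusterEval hL htr k]
    refine ⟨(_, _, _), ⟨?_, trueVars_subset k v, ?_⟩, rfl⟩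
    · rintro _ ⟨w, -, rfl⟩
      exact trueVars_subset k w
    · rintro _ ⟨w, ⟨hw, hvw, hwv⟩, rfl⟩
      exact ih hw fun c hc0 hc => hchain _ rfl (hc.cons hv (hc0 ▸ hvw) (hc0 ▸ hwv))

end Stratification

theorem kFinite_of_kType_mem {L : Set (MF A)} (hL : IsNormalLogic L) {k : ℕ}
    {K : Set (MF A → Prop)} (hK : K.Finite) (hvK : ∀ v, IsTheory L v → kType k v ∈ K) :
    kFinite L k := by
  classical
  have : Nonempty (MF A) := ⟨.bot⟩
  set D := {φ : MF A | φ.varsBelow k}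
  set e : MF A → Set (MF A → Prop) := fun φ => {t ∈ K | t φ}
  have he : ∀ φ ∈ D, ∀ ψ ∈ D, e φ = e ψ → MF.iff φ ψ ∈ L := fun φ hφ ψ hψ h =>
    iff_mem_of_forall_isTheory hL fun v hv => by
      have := Set.ext_iff.1 h (kType k v)
      simpa [e, kType, hvK v hv, MF.subst_mask_of_varsBelow hφ,
        MF.subst_mask_of_varsBelow hψ] using this
  have hfin : (e '' D).Finite := hK.powerset.subset (Set.image_subset_iff.2 fun _ _ _ h => h.1)
  refine ⟨hfin.toFinset.image (Function.invFunOn e D), fun φ hφ => ⟨_,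
    Finset.mem_image_of_mem _ (hfin.mem_toFinset.2 ⟨φ, hφ, rfl⟩), he φ hφ _ ?_ ?_⟩⟩
  · exact Function.invFunOn_mem ⟨φ, hφ, rfl⟩
  · exact (Function.invFunOn_eq ⟨φ, hφ, rfl⟩).symm

/-- Maksimova: every 1-finite transitive normal unimodal logic is locally
tabular. -/
theorem stmt9 (L : Set (MF Unit)) (hL : IsNormalLogic L)
    (htrans : MF.imp (.dia () (.dia () (.var 0))) (.dia () (.var 0)) ∈ L)
    (h1 : kFinite L 1) :
    ∀ k : ℕ, kFinite L k := by
  intro k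
  obtain ⟨n, hn⟩ := exists_alternating_iff hL h1
  exact kFinite_of_kType_mem hL (kTypeStage_finite k n) fun v hv =>
    hv.kType_mem_kTypeStage hL htrans k n fun c _ => not_isStrictChain hL htrans hn c
end
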